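/- Let f : ℂⁿ → ℂ be a polynomial of degree d ≥ 2 and let c ∈ ℂ. Suppose (x_k) is a sequence in ℂⁿ such that ‖x_k‖ → +∞, x_k/‖x_k‖ → u for some vector u ∈ ℂⁿ with ‖u‖ = 1, f(x_k) → c, and ‖x_k‖·‖∇f(x_k)‖ → 0. Then ∇f_d(u) = 0 and f_{d-1}(u) = 0. -/

import Mathlib

/-!
Write `x_k = t_k w_k` with `t_k = ‖x_k‖ → ∞` and `w_k → u`. Splitting `f` into homogeneous
components turns `t_k ∂ᵢf(x_k)` and, thanks to Euler's identity, `d f(x_k) - ∑ᵢ x_{k,i} ∂ᵢf(x_k)`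
into polynomials in `t_k` whose coefficients converge, the leading ones to `∂ᵢf_d(u)` and
`f_{d-1}(u)`. Both sequences converge (Cauchy–Schwarz bounds the gradient terms by
`‖x_k‖ ‖∇f(x_k)‖`), and a polynomial in `t → ∞` with convergent coefficients can only converge
if its leading coefficient tends to `0`.
-/

open MvPolynomial Filter Topology

/-- Evaluation of a complex multivariate polynomial at a point of Hermitian space `ℂⁿ`. -/
noncomputable def cpevalE {n : ℕ} (f : MvPolynomial (Fin n) ℂ) (x : EuclideanSpace ℂ (Fin n)) : ℂ :=
  eval (EuclideanSpace.equiv (Fin n) ℂ x) f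

/-- The vector (∂f/∂x_1, …, ∂f/∂x_n) of complex partial derivatives of a polynomial,
at a point of Hermitian space `ℂⁿ`. -/
noncomputable def cpgrad {n : ℕ} (f : MvPolynomial (Fin n) ℂ) (x : EuclideanSpace ℂ (Fin n)) :
    EuclideanSpace ℂ (Fin n) :=
  (EuclideanSpace.equiv (Fin n) ℂ).symm
    (fun i => eval (EuclideanSpace.equiv (Fin n) ℂ x) (pderiv i f))

open Finset Bornology

namespace MvPolynomial

variable {σ R : Type*} [CommSemiring R] {φ : MvPolynomial σ R} {m N : ℕ}

theorem IsHomogeneous.eval_smul (hφ : φ.IsHomogeneous m) (r : R) (x : σ → R) :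
    eval (r • x) φ = r ^ m * eval x φ := by
  simp only [eval_eq, Finset.mul_sum, Pi.smul_apply, smul_eq_mul, mul_pow,
    prod_mul_distrib, prod_pow_eq_pow_sum]
  refine sum_congr rfl fun d hd => ?_
  have hdeg : ∑ i ∈ d.support, d i = m := by
    rw [← hφ (mem_support_iff.mp hd), Finsupp.weight_apply, Finsupp.sum]
    simp
  rw [hdeg]
  ring

theorem IsHomogeneous.mul_eval_smul_pderiv (hφ : φ.IsHomogeneous m) (i : σ) (r : R)
    (x : σ → R) : r * eval (r • x) (pderiv i φ) = r ^ m * eval x (pderiv i φ) := by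
  rcases m with _ | m
  · rw [← totalDegree_zero_iff_isHomogeneous, totalDegree_eq_zero_iff_eq_C] at hφ
    rw [hφ]; simp
  · rw [(hφ.pderiv (i := i)).eval_smul, ← mul_assoc, ← pow_succ', Nat.add_sub_cancel]

theorem sum_homogeneousComponent_of_totalDegree_le (hN : φ.totalDegree ≤ N) :
    ∑ j ∈ range (N + 1), homogeneousComponent j φ = φ := by
  rw [← sum_subset (range_subset_range.mpr (by omega : φ.totalDegree + 1 ≤ N + 1)),
    sum_homogeneousComponent]
  intro j _ hj
  exact homogeneousComponent_eq_zero j φ (by simp at hj; omega)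

theorem eval_smul_eq_sum_homogeneousComponent (hN : φ.totalDegree ≤ N) (r : R) (x : σ → R) :
    eval (r • x) φ = ∑ j ∈ range (N + 1), r ^ j * eval x (homogeneousComponent j φ) := by
  conv_lhs => rw [← sum_homogeneousComponent_of_totalDegree_le hN]
  simp only [map_sum, (homogeneousComponent_isHomogeneous _ φ).eval_smul]

theorem mul_eval_smul_pderiv_eq_sum_homogeneousComponent (hN : φ.totalDegree ≤ N) (i : σ)
    (r : R) (x : σ → R) : r * eval (r • x) (pderiv i φ) =
      ∑ j ∈ range (N + 1), r ^ j * eval x (pderiv i (homogeneousComponent j φ)) := by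
  conv_lhs => rw [← sum_homogeneousComponent_of_totalDegree_le hN]
  simp only [map_sum, Finset.mul_sum,
    (homogeneousComponent_isHomogeneous _ φ).mul_eval_smul_pderiv]

theorem sum_X_mul_pderiv_eq_sum_homogeneousComponent [Fintype σ] (hN : φ.totalDegree ≤ N) :
    ∑ i, X i * pderiv i φ = ∑ j ∈ range (N + 1), j • homogeneousComponent j φ := by
  conv_lhs => rw [← sum_homogeneousComponent_of_totalDegree_le hN]
  simp only [map_sum, Finset.mul_sum]
  rw [sum_comm]
  exact sum_congr rfl fun j _ => (homogeneousComponent_isHomogeneous j φ).sum_X_mul_pderiv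

theorem sum_mul_eval_smul_pderiv_eq_sum [Fintype σ] (hN : φ.totalDegree ≤ N) (r : R)
    (x : σ → R) :
    ∑ i, (r • x) i * eval (r • x) (pderiv i φ) =
      ∑ j ∈ range (N + 1), j * (r ^ j * eval x (homogeneousComponent j φ)) := by
  have := congrArg (eval (r • x)) (sum_X_mul_pderiv_eq_sum_homogeneousComponent hN)
  simpa only [map_sum, map_mul, eval_X, nsmul_eq_mul, map_natCast,
    (homogeneousComponent_isHomogeneous _ φ).eval_smul] using this

end MvPolynomial

theorem eq_zero_of_tendsto_sum_pow_mul {ι 𝕜 : Type*} [NormedField 𝕜] {l : Filter ι} [l.NeBot]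
    {t : ι → 𝕜} (ht : Tendsto t l (cobounded 𝕜)) {m : ℕ} (hm : 0 < m) {a : ℕ → ι → 𝕜}
    {A : ℕ → 𝕜} (ha : ∀ j ≤ m, Tendsto (a j) l (𝓝 (A j))) {L : 𝕜}
    (hL : Tendsto (fun k => ∑ j ∈ range (m + 1), t k ^ j * a j k) l (𝓝 L)) : A m = 0 := by
  have hinv : Tendsto (fun k => (t k)⁻¹) l (𝓝 0) := tendsto_inv₀_cobounded.comp ht
  have hne : ∀ᶠ k in l, t k ≠ 0 :=
    (ht.eventually (eventually_cobounded_le_norm 1)).mono fun k hk =>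
      norm_pos_iff.mp (zero_lt_one.trans_le hk)
  -- dividing by `t ^ m` kills every term but the leading one
  have hterm : ∀ j ∈ range (m + 1), Tendsto (fun k => (t k)⁻¹ ^ m * (t k ^ j * a j k)) l
      (𝓝 (0 ^ (m - j) * A j)) := by
    intro j hj
    have hjm : j ≤ m := Nat.lt_succ_iff.mp (mem_range.mp hj)
    refine ((hinv.pow (m - j)).mul (ha j hjm)).congr' (hne.mono fun k hk => ?_)
    rw [pow_sub₀ _ (inv_ne_zero hk) hjm, inv_pow (t k) j, inv_inv]
    ring
  have hlead := tendsto_finsetSum _ hterm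
  rw [sum_range_succ, Nat.sub_self, pow_zero, one_mul,
    sum_eq_zero fun j hj => by rw [zero_pow (by simp at hj; omega), zero_mul], zero_add] at hlead
  have hzero := (hinv.pow m).mul hL
  rw [zero_pow hm.ne', zero_mul] at hzero
  exact tendsto_nhds_unique (hlead.congr fun k => (Finset.mul_sum ..).symm) hzero

section Asymptotics

variable {σ 𝕜 : Type*} [NormedField 𝕜] {f : MvPolynomial σ 𝕜} {t : ℕ → 𝕜} {w : ℕ → σ → 𝕜}
  {u : σ → 𝕜}

theorem eval_pderiv_homogeneousComponent_eq_zero_of_tendsto {d : ℕ} (hf : f.totalDegree ≤ d)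
    (hd : 0 < d) (ht : Tendsto t atTop (cobounded 𝕜)) (hw : Tendsto w atTop (𝓝 u)) (i : σ)
    (hgrad : Tendsto (fun k => t k * eval (t k • w k) (pderiv i f)) atTop (𝓝 0)) :
    eval u (pderiv i (homogeneousComponent d f)) = 0 :=
  eq_zero_of_tendsto_sum_pow_mul ht hd
    (a := fun j k => eval (w k) (pderiv i (homogeneousComponent j f)))
    (fun _ _ => ((continuous_eval _).tendsto u).comp hw)
    (hgrad.congr fun k => mul_eval_smul_pderiv_eq_sum_homogeneousComponent hf i (t k) (w k))

theorem eval_homogeneousComponent_eq_zero_of_tendsto [Fintype σ] {m : ℕ}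
    (hf : f.totalDegree ≤ m + 1) (hm : 0 < m) (ht : Tendsto t atTop (cobounded 𝕜))
    (hw : Tendsto w atTop (𝓝 u)) {c : 𝕜}
    (hval : Tendsto (fun k => eval (t k • w k) f) atTop (𝓝 c))
    (heuler : Tendsto (fun k => ∑ i, (t k • w k) i * eval (t k • w k) (pderiv i f))
      atTop (𝓝 0)) :
    eval u (homogeneousComponent m f) = 0 := by
  -- in `(m + 1) f - ∑ xᵢ ∂ᵢ f` the degree `m + 1` part cancels by Euler's identity
  have hexp : ∀ k, (m + 1 : 𝕜) * eval (t k • w k) f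
      - ∑ i, (t k • w k) i * eval (t k • w k) (pderiv i f)
      = ∑ j ∈ range (m + 1),
          t k ^ j * ((m + 1 - j : 𝕜) * eval (w k) (homogeneousComponent j f)) := by
    intro k
    rw [eval_smul_eq_sum_homogeneousComponent hf, sum_mul_eval_smul_pderiv_eq_sum hf,
      Finset.mul_sum, ← sum_sub_distrib, sum_range_succ _ (m + 1)]
    push_cast
    rw [sub_self, add_zero]
    exact sum_congr rfl fun j _ => by ring
  have hlim := eq_zero_of_tendsto_sum_pow_mul ht hm
    (fun j _ => tendsto_const_nhds.mul (((continuous_eval _).tendsto u).comp hw))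
    (((tendsto_const_nhds.mul hval).sub heuler).congr hexp)
  simpa using hlim

end Asymptotics

theorem EuclideanSpace.norm_sum_mul_le {ι 𝕜 : Type*} [Fintype ι] [RCLike 𝕜]
    (x y : EuclideanSpace 𝕜 ι) : ‖∑ i, x i * y i‖ ≤ ‖x‖ * ‖y‖ :=
  calc ‖∑ i, x i * y i‖ ≤ ∑ i, ‖x i‖ * ‖y i‖ := norm_sum_le_of_le _ fun i _ => norm_mul_le _ _
    _ ≤ √(∑ i, ‖x i‖ ^ 2) * √(∑ i, ‖y i‖ ^ 2) := Real.sum_mul_le_sqrt_mul_sqrt _ _ _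
    _ = ‖x‖ * ‖y‖ := by rw [EuclideanSpace.norm_eq, EuclideanSpace.norm_eq]

theorem statement2_general {n : ℕ} (f : MvPolynomial (Fin n) ℂ) (d : ℕ) (hd : 2 ≤ d)
    (hdeg : f.totalDegree = d) (c : ℂ)
    (x : ℕ → EuclideanSpace ℂ (Fin n)) (u : EuclideanSpace ℂ (Fin n))
    (hnorm : Tendsto (fun k => ‖x k‖) atTop atTop)
    (hdir : Tendsto (fun k => (‖x k‖)⁻¹ • x k) atTop (𝓝 u))
    (hval : Tendsto (fun k => cpevalE f (x k)) atTop (𝓝 c))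
    (hmal : Tendsto (fun k => ‖x k‖ * ‖cpgrad f (x k)‖) atTop (𝓝 0)) :
    cpgrad (homogeneousComponent d f) u = 0 ∧
      cpevalE (homogeneousComponent (d - 1) f) u = 0 := by
  obtain ⟨m, rfl⟩ : ∃ m, d = m + 1 := ⟨d - 1, by omega⟩
  set t : ℕ → ℂ := fun k => (‖x k‖ : ℂ)
  set w : ℕ → Fin n → ℂ := fun k => (‖x k‖⁻¹ • x k).ofLp
  have ht : Tendsto t atTop (cobounded ℂ) := by
    rw [← tendsto_norm_atTop_iff_cobounded]
    simpa [t] using hnorm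
  have hw : Tendsto w atTop (𝓝 u.ofLp) := ((PiLp.continuous_ofLp 2 _).tendsto u).comp hdir
  have hx : ∀ k, t k • w k = (x k).ofLp := by
    intro k
    rw [← WithLp.ofLp_smul]
    congr 1
    rcases eq_or_ne (x k) 0 with hk | hk
    · simp [t, hk]
    · rw [Complex.coe_smul]
      exact smul_inv_smul₀ (norm_ne_zero_iff.mpr hk) _
  have hgrad : ∀ i, Tendsto (fun k => t k * eval (t k • w k) (pderiv i f)) atTop (𝓝 0) := by
    refine fun i => squeeze_zero_norm (fun k => ?_) hmal
    rw [hx, norm_mul, Complex.norm_real, norm_norm]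
    exact mul_le_mul_of_nonneg_left (PiLp.norm_apply_le (cpgrad f (x k)) i) (norm_nonneg _)
  have heuler : Tendsto (fun k => ∑ i, (t k • w k) i * eval (t k • w k) (pderiv i f))
      atTop (𝓝 0) := by
    refine squeeze_zero_norm (fun k => ?_) hmal
    rw [hx]
    exact EuclideanSpace.norm_sum_mul_le (x k) (cpgrad f (x k))
  refine ⟨?_, ?_⟩
  · ext i
    exact eval_pderiv_homogeneousComponent_eq_zero_of_tendsto hdeg.le m.succ_pos ht hw i (hgrad i)
  · rw [Nat.add_sub_cancel]
    exact eval_homogeneousComponent_eq_zero_of_tendsto hdeg.le (by omega) ht hw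
      (hval.congr fun k => by rw [hx]; rfl) heuler

/-- If `f : ℂⁿ → ℂ` is a polynomial of degree `d ≥ 2`, `c ∈ ℂ`, and `(x_k)` is a sequence with
`‖x_k‖ → ∞`, `x_k/‖x_k‖ → u` with `‖u‖ = 1`, `f(x_k) → c` and `‖x_k‖·‖∇f(x_k)‖ → 0`,
then `∇f_d(u) = 0` and `f_{d-1}(u) = 0`. -/
theorem statement2 {n : ℕ} (f : MvPolynomial (Fin n) ℂ) (d : ℕ) (hd : 2 ≤ d)
    (hdeg : f.totalDegree = d) (c : ℂ)
    (x : ℕ → EuclideanSpace ℂ (Fin n)) (u : EuclideanSpace ℂ (Fin n)) (hu : ‖u‖ = 1)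
    (hnorm : Tendsto (fun k => ‖x k‖) atTop atTop)
    (hdir : Tendsto (fun k => (‖x k‖)⁻¹ • x k) atTop (𝓝 u))
    (hval : Tendsto (fun k => cpevalE f (x k)) atTop (𝓝 c))
    (hmal : Tendsto (fun k => ‖x k‖ * ‖cpgrad f (x k)‖) atTop (𝓝 0)) :
    cpgrad (homogeneousComponent d f) u = 0 ∧
      cpevalE (homogeneousComponent (d - 1) f) u = 0 :=
  statement2_general f d hd hdeg c x u hnorm hdir hval hmal
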